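/- arXiv:2002.00635 — 5 statements merged into one kernel-verified Lean document; each statement's English description precedes it below -/
import Mathlib

section
/- Let t ≥ 2, let ζ be a primitive M-th root of unity in ℂ with M even, and define ψ_t(n) = ζ^{(n² − (2^{t+1}−3)²)/(3·2^{t+2})} · χ_t(n) for integers n with χ_t(n) ≠ 0 (the exponent is an integer) and ψ_t(n) = 0 otherwise. Then ψ_t(n + 3·2^t·M) = −ψ_t(n) for all integers n, and consequently ∑_{n=1}^{3·2^{t+1}·M} ψ_t(n) = 0. -/
/-!
Write `M = 2m`, so that `ζ ^ m = -1`. Shifting `n` by `3·2^t·M = 3·2^(t+1)·m` leaves `χ_t` unchanged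
and adds `m·(n + 3·2^t·m)` to the exponent of `ζ`. Where `χ_t(n) ≠ 0` the integer `n` is odd, hence so
is `n + 3·2^t·m`, and the factor `(ζ ^ m) ^ (n + 3·2^t·m) = -1` makes `ψ_t` antiperiodic. The sum over
two antiperiods then cancels in pairs.
-/

/-- The periodic function `χ_t` of period `3·2^(t+1)`. -/
def chi (t : ℕ) (n : ℤ) : ℤ :=
  if n % (3 * 2 ^ (t + 1)) = (2 ^ (t + 1) - 3) % (3 * 2 ^ (t + 1)) ∨
      n % (3 * 2 ^ (t + 1)) = (3 + 2 ^ (t + 2)) % (3 * 2 ^ (t + 1)) then 1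
  else if n % (3 * 2 ^ (t + 1)) = (2 ^ (t + 1) + 3) % (3 * 2 ^ (t + 1)) ∨
      n % (3 * 2 ^ (t + 1)) = (2 ^ (t + 2) - 3) % (3 * 2 ^ (t + 1)) then -1
  else 0

open Function Finset

theorem Function.Antiperiodic.sum_range_two_mul {β : Type*} [AddCommGroup β] {f : ℕ → β} {c : ℕ}
    (hf : Antiperiodic f c) : ∑ i ∈ range (2 * c), f i = 0 := by
  simp [two_mul, sum_range_add, add_comm c, hf _]

theorem chi_add_mul_period (t : ℕ) (n k : ℤ) : chi t (n + 3 * 2 ^ (t + 1) * k) = chi t n := by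
  simp only [chi, Int.add_mul_emod_self_left]

theorem odd_of_chi_ne_zero {t : ℕ} {n : ℤ} (h : chi t n ≠ 0) : Odd n := by
  have hodd : ∀ r, Odd r → n ≡ r [ZMOD 3 * 2 ^ (t + 1)] → Odd n := fun r hr hn =>
    Int.odd_iff.2 <| Int.odd_iff.1 hr ▸
      hn.of_dvd (dvd_mul_of_dvd_right (dvd_pow_self 2 t.succ_ne_zero) 3)
  unfold chi at h
  split_ifs at h with h₁ h₂
  · rcases h₁ with h₁ | h₁ <;> refine hodd _ ?_ h₁ <;>
      norm_num [Int.odd_sub, Int.odd_add, parity_simps]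
  · rcases h₂ with h₂ | h₂ <;> refine hodd _ ?_ h₂ <;>
      norm_num [Int.odd_sub, Int.odd_add, parity_simps]
  · exact absurd rfl h

def psi {K : Type*} [DivisionRing K] (t : ℕ) (ζ : K) (n : ℤ) : K :=
  ζ ^ ((n ^ 2 - (2 ^ (t + 1) - 3) ^ 2) / (3 * 2 ^ (t + 2))) * (chi t n : K)

theorem psi_antiperiodic {K : Type*} [DivisionRing K] {t m : ℕ} (ht : 1 ≤ t) {ζ : K}
    (hζ₀ : ζ ≠ 0) (hζ : ζ ^ m = -1) : Antiperiodic (psi t ζ) (3 * 2 ^ (t + 1) * m) := by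
  intro n
  rw [psi, psi, chi_add_mul_period]
  by_cases h₀ : chi t n = 0
  · simp [h₀]
  have hexp : ((n + 3 * 2 ^ (t + 1) * m) ^ 2 - (2 ^ (t + 1) - 3) ^ 2) / (3 * 2 ^ (t + 2))
      = (n ^ 2 - (2 ^ (t + 1) - 3) ^ 2) / (3 * 2 ^ (t + 2)) + m * (n + 3 * 2 ^ t * m) := by
    rw [← Int.add_mul_ediv_left _ _ (by positivity)]
    ring_nf
  have hodd : Odd (n + 3 * 2 ^ t * m) := by
    obtain ⟨s, rfl⟩ := Nat.exists_eq_add_of_le ht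
    exact (odd_of_chi_ne_zero h₀).add_even ⟨3 * 2 ^ s * m, by ring⟩
  rw [hexp, zpow_add₀ hζ₀, zpow_mul, zpow_natCast, hζ, hodd.neg_one_zpow]
  simp

theorem psi_antiperiodic_and_sum_zero (t : ℕ) (ht : 2 ≤ t) (M : ℕ) (hM : 0 < M)
    (hMe : Even M) (ζ : ℂ) (hζ : IsPrimitiveRoot ζ M) :
    (∀ n : ℤ,
        ζ ^ (((n + 3 * 2 ^ t * M) ^ 2 - (2 ^ (t + 1) - 3) ^ 2) / (3 * 2 ^ (t + 2))) *
            (chi t (n + 3 * 2 ^ t * M) : ℂ) =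
          -(ζ ^ ((n ^ 2 - (2 ^ (t + 1) - 3) ^ 2) / (3 * 2 ^ (t + 2))) * (chi t n : ℂ))) ∧
      ∑ n ∈ Finset.range (3 * 2 ^ (t + 1) * M),
          ζ ^ ((((n : ℤ) + 1) ^ 2 - (2 ^ (t + 1) - 3) ^ 2) / (3 * 2 ^ (t + 2))) *
            (chi t ((n : ℤ) + 1) : ℂ) = 0 := by
  obtain ⟨m, rfl⟩ := hMe
  have hζm : ζ ^ m = -1 := (hζ.pow hM (two_mul m ▸ mul_comm 2 m)).eq_neg_one_of_two_right
  have hanti : Antiperiodic (psi t ζ) (3 * 2 ^ t * (m + m : ℕ)) := by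
    have hperiod : (3 * 2 ^ t * (m + m : ℕ) : ℤ) = 3 * 2 ^ (t + 1) * m := by push_cast; ring
    exact hperiod ▸ psi_antiperiodic (by omega) (hζ.ne_zero hM.ne') hζm
  refine ⟨hanti, ?_⟩
  have hshift : Antiperiodic (fun i : ℕ => psi t ζ (i + 1)) (3 * 2 ^ t * (m + m)) := fun i => by
    simpa [add_right_comm] using hanti (i + 1)
  have hlen : 3 * 2 ^ (t + 1) * (m + m) = 2 * (3 * 2 ^ t * (m + m)) := by ring
  exact hlen ▸ hshift.sum_range_two_mul
end

section
/- Let t ≥ 2, let M be an odd positive integer, and let ζ be a primitive M-th root of unity in ℂ. Then ∑_{m=0}^{M−1} ζ^{3·2^t m² + (2^{t+2}−3)m + 2^t − 1} = ∑_{m=0}^{M−1} ζ^{3·2^t m² + (2^{t+2}+3)m + 2^t + 3}. -/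
theorem shift_sum_eq (t : ℕ) (ht : 2 ≤ t) (M : ℕ) (hM : 0 < M) (hModd : Odd M)
    (ζ : ℂ) (hζ : IsPrimitiveRoot ζ M) :
    ∑ m ∈ Finset.range M,
        ζ ^ (3 * 2 ^ t * (m : ℤ) ^ 2 + (2 ^ (t + 2) - 3) * (m : ℤ) + 2 ^ t - 1) =
      ∑ m ∈ Finset.range M,
        ζ ^ (3 * 2 ^ t * (m : ℤ) ^ 2 + (2 ^ (t + 2) + 3) * (m : ℤ) + 2 ^ t + 3) := by
  haveI : NeZero M := ⟨hM.ne'⟩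
  have hζ0 : ζ ≠ 0 := hζ.ne_zero hM.ne'
  have hζM : ζ ^ (M : ℤ) = 1 := by
    rw [zpow_natCast]; exact hζ.pow_eq_one
  -- ζ^a depends only on a mod M
  have L : ∀ a b : ℤ, ((a : ZMod M) = (b : ZMod M)) → ζ ^ a = ζ ^ b := by
    intro a b hab
    have hdvd : (M : ℤ) ∣ a - b :=
      (Int.ModEq.dvd ((ZMod.intCast_eq_intCast_iff _ _ _).mp hab.symm))
    obtain ⟨k, hk⟩ := hdvd
    have ha : a = b + M * k := by linarith
    rw [ha, zpow_add₀ hζ0, zpow_mul, hζM, one_zpow, mul_one]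
  -- inverse of 2^t mod M
  have hcop : Nat.Coprime (2 ^ t) M :=
    Nat.Coprime.pow_left _ (hModd.coprime_two_left)
  set c : ZMod M := (((2 ^ t : ℕ) : ZMod M))⁻¹ with hc_def
  have hc : ((2 ^ t : ℕ) : ZMod M) * c = 1 := ZMod.coe_mul_inv_eq_one _ hcop
  have hc' : (2 : ZMod M) ^ t * c = 1 := by push_cast at hc ⊢; exact hc
  -- convert both sums to sums over ZMod M
  have conv_sum : ∀ f : ℤ → ℂ, (∀ a b : ℤ, ((a : ZMod M) = (b : ZMod M)) → f a = f b) →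
      ∑ m ∈ Finset.range M, f m = ∑ x : ZMod M, f (x.val : ℤ) := by
    intro f hf
    refine Finset.sum_nbij' (fun m => (m : ZMod M)) (fun x => x.val) ?_ ?_ ?_ ?_ ?_
    · intro m _; exact Finset.mem_univ _
    · intro x _; exact Finset.mem_range.mpr (ZMod.val_lt x)
    · intro m hm; exact ZMod.val_cast_of_lt (Finset.mem_range.mp hm)
    · intro x _; exact ZMod.natCast_zmod_val x
    · intro m _
      refine hf _ _ ?_
      push_cast
      rw [ZMod.natCast_zmod_val]
  have e1 : ∑ m ∈ Finset.range M,
      ζ ^ (3 * 2 ^ t * (m : ℤ) ^ 2 + (2 ^ (t + 2) - 3) * (m : ℤ) + 2 ^ t - 1) =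
      ∑ x : ZMod M,
      ζ ^ (3 * 2 ^ t * (x.val : ℤ) ^ 2 + (2 ^ (t + 2) - 3) * (x.val : ℤ) + 2 ^ t - 1) :=
    conv_sum (fun a => ζ ^ (3 * 2 ^ t * a ^ 2 + (2 ^ (t + 2) - 3) * a + 2 ^ t - 1))
      (fun a b hab => L _ _ (by push_cast; linear_combination (3 * 2 ^ t * ((a : ZMod M) + b) + 2 ^ (t + 2) - 3) * hab))
  have e2 : ∑ m ∈ Finset.range M,
      ζ ^ (3 * 2 ^ t * (m : ℤ) ^ 2 + (2 ^ (t + 2) + 3) * (m : ℤ) + 2 ^ t + 3) =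
      ∑ x : ZMod M,
      ζ ^ (3 * 2 ^ t * (x.val : ℤ) ^ 2 + (2 ^ (t + 2) + 3) * (x.val : ℤ) + 2 ^ t + 3) :=
    conv_sum (fun a => ζ ^ (3 * 2 ^ t * a ^ 2 + (2 ^ (t + 2) + 3) * a + 2 ^ t + 3))
      (fun a b hab => L _ _ (by push_cast; linear_combination (3 * 2 ^ t * ((a : ZMod M) + b) + 2 ^ (t + 2) + 3) * hab))
  rw [e1, e2]
  -- shift by c
  rw [← Equiv.sum_comp (Equiv.addRight c) (fun x : ZMod M =>
      ζ ^ (3 * 2 ^ t * ((x.val : ℤ)) ^ 2 + (2 ^ (t + 2) - 3) * (x.val : ℤ) + 2 ^ t - 1))]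
  refine Finset.sum_congr rfl fun x _ => ?_
  refine L _ _ ?_
  push_cast
  rw [ZMod.natCast_zmod_val, ZMod.natCast_zmod_val]
  simp only [Equiv.coe_addRight]
  linear_combination (6 * (x : ZMod M) + 3 * c + 4) * hc'
end

section
/- Let t ≥ 2, let M be an odd positive integer, and let ζ be a primitive M-th root of unity. Then the mean value of ψ_t over a full period is zero: ∑_{m=0}^{M−1} ζ^{3·2^t m² + (2^{t+2}+3)m + 2^t + 3} − ∑_{m=0}^{M−1} ζ^{3·2^t m² + (2^{t+2}−3)m + 2^t − 1} + ∑_{m=0}^{M−1} ζ^{3·2^t m² + (2^{t+1}−3)m} − ∑_{m=0}^{M−1} ζ^{3·2^t m² + (2^{t+1}+3)m + 2} = 0. -/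
/-!
Since `M` is odd, `2 ^ t` has an inverse `a` modulo `M`. Summing over a full period is invariant
under the shift `m ↦ m + a`, and for `q = 2 ^ t` this shift turns the exponent
`3 q m² + (k q - 3) m + c` into `3 q m² + (k q + 3) m + c + k` modulo `M`. With `k = 4` this
matches the second sum with the first, with `k = 2` the third with the fourth.
-/

open Finset Function

namespace Function.Periodic

variable {α : Type*} [AddCommGroup α] {f : ℤ → α} {M : ℕ}

theorem sum_range_comp_add_one (hf : Periodic f M) :
    ∑ m ∈ range M, f (m + 1) = ∑ m ∈ range M, f m := by
  have h := (sum_range_succ' (fun m : ℕ => f m) M).symm.trans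
    (sum_range_succ (fun m : ℕ => f m) M)
  push_cast at h
  rw [show f M = f 0 by simpa using hf 0] at h
  exact add_right_cancel h

theorem sum_range_comp_add (hf : Periodic f M) (a : ℤ) :
    ∑ m ∈ range M, f (m + a) = ∑ m ∈ range M, f m := by
  have step (b : ℤ) : ∑ m ∈ range M, f (m + (b + 1)) = ∑ m ∈ range M, f (m + b) := by
    simpa only [add_comm b 1, ← add_assoc] using (hf.add_const b).sum_range_comp_add_one
  induction a using Int.induction_on with
  | zero => simp
  | succ i ih => rw [step, ih]
  | pred i ih => rw [← ih, ← step, sub_add_cancel]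

end Function.Periodic

namespace IsPrimitiveRoot

variable {G₀ : Type*} [CommGroupWithZero G₀] {ζ : G₀} {M : ℕ}

theorem zpow_eq_zpow_of_dvd_sub (hζ : IsPrimitiveRoot ζ M) (hM : 0 < M) {j k : ℤ}
    (h : (M : ℤ) ∣ j - k) : ζ ^ j = ζ ^ k := by
  rw [← sub_add_cancel j k, zpow_add₀ (hζ.ne_zero hM.ne'), (hζ.zpow_eq_one_iff_dvd _).2 h,
    one_mul]

theorem periodic_zpow_quadratic (hζ : IsPrimitiveRoot ζ M) (hM : 0 < M) (p b c : ℤ) :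
    Periodic (fun m : ℤ => ζ ^ (p * m ^ 2 + b * m + c)) M := fun m =>
  hζ.zpow_eq_zpow_of_dvd_sub hM ⟨p * (2 * m + M) + b, by ring⟩

theorem sum_range_zpow_shift_inv {K : Type*} [Field K] {ζ : K} (hζ : IsPrimitiveRoot ζ M)
    (hM : 0 < M) {q a : ℤ} (ha : (M : ℤ) ∣ q * a - 1) (k c : ℤ) :
    ∑ m ∈ range M, ζ ^ (3 * q * (m : ℤ) ^ 2 + (k * q - 3) * m + c) =
      ∑ m ∈ range M, ζ ^ (3 * q * (m : ℤ) ^ 2 + (k * q + 3) * m + c + k) := by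
  rw [← (hζ.periodic_zpow_quadratic hM _ _ _).sum_range_comp_add a]
  refine sum_congr rfl fun m _ => hζ.zpow_eq_zpow_of_dvd_sub hM ?_
  rw [show 3 * q * ((m : ℤ) + a) ^ 2 + (k * q - 3) * (m + a) + c -
      (3 * q * (m : ℤ) ^ 2 + (k * q + 3) * m + c + k) = (6 * m + 3 * a + k) * (q * a - 1) by ring]
  exact dvd_mul_of_dvd_right ha _

end IsPrimitiveRoot

theorem four_sum_zero_general (t : ℕ) (M : ℕ) (hM : 0 < M) (hModd : Odd M)
    (ζ : ℂ) (hζ : IsPrimitiveRoot ζ M) :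
    ∑ m ∈ Finset.range M,
        ζ ^ (3 * 2 ^ t * (m : ℤ) ^ 2 + (2 ^ (t + 2) + 3) * (m : ℤ) + 2 ^ t + 3) -
      ∑ m ∈ Finset.range M,
        ζ ^ (3 * 2 ^ t * (m : ℤ) ^ 2 + (2 ^ (t + 2) - 3) * (m : ℤ) + 2 ^ t - 1) +
      ∑ m ∈ Finset.range M,
        ζ ^ (3 * 2 ^ t * (m : ℤ) ^ 2 + (2 ^ (t + 1) - 3) * (m : ℤ)) -
      ∑ m ∈ Finset.range M,
        ζ ^ (3 * 2 ^ t * (m : ℤ) ^ 2 + (2 ^ (t + 1) + 3) * (m : ℤ) + 2) = 0 := by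
  obtain ⟨u, v, huv⟩ : IsCoprime ((2 ^ t : ℕ) : ℤ) M :=
    Nat.isCoprime_iff_coprime.2 ((Nat.coprime_two_left.2 hModd).pow_left t)
  have ha : (M : ℤ) ∣ 2 ^ t * u - 1 := ⟨-v, by push_cast at huv; linear_combination huv⟩
  have h21 : ∑ m ∈ Finset.range M,
        ζ ^ (3 * 2 ^ t * (m : ℤ) ^ 2 + (2 ^ (t + 2) - 3) * (m : ℤ) + 2 ^ t - 1) =
      ∑ m ∈ Finset.range M,
        ζ ^ (3 * 2 ^ t * (m : ℤ) ^ 2 + (2 ^ (t + 2) + 3) * (m : ℤ) + 2 ^ t + 3) := by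
    convert hζ.sum_range_zpow_shift_inv hM ha 4 (2 ^ t - 1) using 3 <;> ring
  have h34 : ∑ m ∈ Finset.range M,
        ζ ^ (3 * 2 ^ t * (m : ℤ) ^ 2 + (2 ^ (t + 1) - 3) * (m : ℤ)) =
      ∑ m ∈ Finset.range M,
        ζ ^ (3 * 2 ^ t * (m : ℤ) ^ 2 + (2 ^ (t + 1) + 3) * (m : ℤ) + 2) := by
    convert hζ.sum_range_zpow_shift_inv hM ha 2 0 using 3 <;> ring
  rw [h21, h34]
  ring

theorem four_sum_zero (t : ℕ) (ht : 2 ≤ t) (M : ℕ) (hM : 0 < M) (hModd : Odd M)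
    (ζ : ℂ) (hζ : IsPrimitiveRoot ζ M) :
    ∑ m ∈ Finset.range M,
        ζ ^ (3 * 2 ^ t * (m : ℤ) ^ 2 + (2 ^ (t + 2) + 3) * (m : ℤ) + 2 ^ t + 3) -
      ∑ m ∈ Finset.range M,
        ζ ^ (3 * 2 ^ t * (m : ℤ) ^ 2 + (2 ^ (t + 2) - 3) * (m : ℤ) + 2 ^ t - 1) +
      ∑ m ∈ Finset.range M,
        ζ ^ (3 * 2 ^ t * (m : ℤ) ^ 2 + (2 ^ (t + 1) - 3) * (m : ℤ)) -
      ∑ m ∈ Finset.range M,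
        ζ ^ (3 * 2 ^ t * (m : ℤ) ^ 2 + (2 ^ (t + 1) + 3) * (m : ℤ) + 2) = 0 :=
  four_sum_zero_general t M hM hModd ζ hζ
end

section
/- Let p be a prime, r ≥ 1 and n ≥ r natural numbers. Then in ℤ[q], (1 − (1−q)^p)^n ≡ q^{pn−(p−1)(r−1)} · h(q) (mod p^r) for some polynomial h ∈ ℤ[q]; i.e., every coefficient of q^k in (1 − (1−q)^p)^n with k < pn − (p−1)(r−1) is divisible by p^r. -/
open Polynomial in
/-- Straub's Lemma 3.3: all coefficients of `(1-(1-q)^p)^n` of order below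
`pn-(p-1)(r-1)` vanish modulo `p^r`. -/
theorem straub_lemma_3_3 (p r n : ℕ) (hp : p.Prime) (hr : 1 ≤ r) (hn : r ≤ n)
    (k : ℕ) (hk : k < p * n - (p - 1) * (r - 1)) :
    ((p : ℤ) ^ r) ∣ (((1 - (1 - X) ^ p) ^ n : Polynomial ℤ)).coeff k := by
  haveI := Fact.mk hp
  -- Step 1: (1-X)^p ≡ 1 - X^p mod p
  have hdvd : (C (p:ℤ)) ∣ (((1 - X) ^ p - (1 - X ^ p)) : Polynomial ℤ) := by
    rw [Polynomial.C_dvd_iff_dvd_coeff]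
    intro i
    have hmap : Polynomial.map (Int.castRingHom (ZMod p)) ((1 - X) ^ p - (1 - X ^ p)) = 0 := by
      have hfr : ((1 : Polynomial (ZMod p)) - X) ^ p = 1 - X ^ p := by
        rw [sub_pow_char, one_pow]
      simp [Polynomial.map_sub, Polynomial.map_pow, hfr]
    have h2 := congrArg (fun f => Polynomial.coeff f i) hmap
    simp only [Polynomial.coeff_map, Polynomial.coeff_zero] at h2
    exact (ZMod.intCast_zmod_eq_zero_iff_dvd _ p).mp h2
  obtain ⟨G, hG⟩ := hdvd
  have hG0 : G.coeff 0 = 0 := by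
    have h0 := congrArg (fun f => Polynomial.eval 0 f) hG
    simp only [Polynomial.eval_sub, Polynomial.eval_pow, Polynomial.eval_one,
      Polynomial.eval_X, Polynomial.eval_mul, Polynomial.eval_C, sub_zero, one_pow,
      zero_pow hp.ne_zero, sub_self] at h0
    rw [Polynomial.coeff_zero_eq_eval_zero]
    have hpne : (p : ℤ) ≠ 0 := by exact_mod_cast hp.ne_zero
    exact (mul_eq_zero.mp h0.symm).resolve_left hpne
  have hXG : (X : Polynomial ℤ) ∣ G := Polynomial.X_dvd_iff.mpr hG0
  have key : ((1 - (1 - X) ^ p) : Polynomial ℤ) = X ^ p + (-(C (p:ℤ) * G)) := by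
    linear_combination -hG
  rw [key, add_pow]
  rw [Polynomial.finset_sum_coeff]
  apply Finset.dvd_sum
  intro m hm
  have hmn : m ≤ n := Nat.lt_succ_iff.mp (Finset.mem_range.mp hm)
  set j := n - m with hj
  have hmj : m + j = n := by omega
  by_cases hjr : r ≤ j
  · -- p^r divides the C p ^ j factor
    have h1 : (C ((p:ℤ) ^ r)) ∣ (-(C (p:ℤ) * G)) ^ j := by
      rw [neg_pow, mul_pow, ← Polynomial.C_pow]
      exact Dvd.dvd.mul_left
        (dvd_mul_of_dvd_left (map_dvd C (pow_dvd_pow (p:ℤ) hjr)) _) _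
    have h2 : (C ((p:ℤ) ^ r)) ∣ ((X:Polynomial ℤ) ^ p) ^ m * (-(C (p:ℤ) * G)) ^ j
        * (n.choose m : Polynomial ℤ) :=
      dvd_mul_of_dvd_left (dvd_mul_of_dvd_right h1 _) _
    exact (Polynomial.C_dvd_iff_dvd_coeff _ _).mp h2 k
  · -- trailing degree too big: coefficient is zero
    push_neg at hjr
    have hXd : (X:Polynomial ℤ) ^ (p * m + j) ∣
        ((X:Polynomial ℤ) ^ p) ^ m * (-(C (p:ℤ) * G)) ^ j
        * (n.choose m : Polynomial ℤ) := by
      rw [← pow_mul, pow_add]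
      apply dvd_mul_of_dvd_left
      apply mul_dvd_mul dvd_rfl
      exact pow_dvd_pow_of_dvd (dvd_neg.mpr (dvd_mul_of_dvd_right hXG _)) j
    obtain ⟨g, hg⟩ := hXd
    have hkd : k < p * m + j := by
      have hA : p * m + p * j = p * n := by rw [← Nat.left_distrib, hmj]
      have hB : (p - 1) * j ≤ (p - 1) * (r - 1) :=
        Nat.mul_le_mul_left _ (by omega)
      have hC : (p - 1) * j + j = p * j := by
        have hle : j ≤ p * j := Nat.le_mul_of_pos_left j hp.pos
        rw [Nat.sub_one_mul]; omega
      omega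
    rw [hg, mul_comm, Polynomial.coeff_mul_X_pow']
    simp [Nat.not_le.mpr hkd]
end

section
/- Let p be a prime, r ≥ 1, m ≥ 1, and let i, j, l be natural numbers with 0 ≤ i ≤ p − 1 and 1 ≤ j < p − i. Then the binomial coefficient C(i + l·p, p^r·m − j) is divisible by p^r. -/
/-- Straub's Lemma 3.4. -/
theorem straub_lemma_3_4 (p r m i j l : ℕ) (hp : p.Prime) (hr : 1 ≤ r) (hm : 1 ≤ m)
    (hi : i ≤ p - 1) (hj1 : 1 ≤ j) (hj2 : j < p - i) :
    p ^ r ∣ Nat.choose (i + l * p) (p ^ r * m - j) := by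
  have hp1 : 1 < p := hp.one_lt
  set n := i + l * p with hn
  set k := p ^ r * m - j with hk
  have hjp : j < p := lt_of_lt_of_le hj2 (Nat.sub_le _ _)
  have hij : i + j < p := by omega
  rcases lt_or_ge n k with hnk | hkn
  · rw [Nat.choose_eq_zero_of_lt hnk]; exact dvd_zero _
  -- main case: k ≤ n
  have hFact : Fact p.Prime := ⟨hp⟩
  -- key: for 1 ≤ s ≤ r, k % p^s = p^s - j
  have hkmod : ∀ s, 1 ≤ s → s ≤ r → k % p ^ s = p ^ s - j := by
    intro s hs1 hsr
    have hps : p ≤ p ^ s := Nat.le_self_pow (by omega) p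
    have hdvd : p ^ s ∣ p ^ r * m := Dvd.dvd.mul_right (pow_dvd_pow p hsr) m
    obtain ⟨t, ht⟩ := hdvd
    have hpos : 0 < p ^ s * t := by rw [← ht]; exact Nat.mul_pos (pow_pos (by omega) r) hm
    have ht1 : 1 ≤ t := Nat.pos_of_ne_zero (by rintro rfl; simp at hpos)
    have : k = p ^ s * (t - 1) + (p ^ s - j) := by
      rw [hk, ht]; cases' t with t; · omega
      simp [Nat.mul_succ]; omega
    rw [this, Nat.mul_add_mod]
    exact Nat.mod_eq_of_lt (by omega)
  have hnmodp : n % p = i := by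
    rw [hn, Nat.add_mul_mod_self_right]; exact Nat.mod_eq_of_lt (by omega)
  have hkmodp : k % p = p - j := by
    have := hkmod 1 le_rfl hr
    simpa using this
  have hnkmodp : (n - k) % p = i + j := by
    have hsum : ((n - k) % p + k % p) % p = n % p := by
      rw [Nat.add_mod_mod, Nat.mod_add_mod]
      congr 1; omega
    rw [hkmodp, hnmodp] at hsum
    have hx : (n - k) % p < p := Nat.mod_lt _ (by omega)
    rcases lt_or_ge ((n - k) % p + (p - j)) p with h | h
    · rw [Nat.mod_eq_of_lt h] at hsum; omega
    · have : (n - k) % p + (p - j) - p < p := by omega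
      rw [Nat.mod_eq_sub_mod h, Nat.mod_eq_of_lt this] at hsum; omega
  -- carries at every position 1..r
  have hcarry : ∀ s, 1 ≤ s → s ≤ r → p ^ s ≤ k % p ^ s + (n - k) % p ^ s := by
    intro s hs1 hsr
    have h1 : k % p ^ s = p ^ s - j := hkmod s hs1 hsr
    have h2 : j ≤ (n - k) % p ^ s := by
      have hd : p ∣ p ^ s := dvd_pow_self p (by omega)
      have : ((n - k) % p ^ s) % p = (n - k) % p := Nat.mod_mod_of_dvd _ hd
      have hge : (n - k) % p ≤ (n - k) % p ^ s := this ▸ Nat.mod_le _ _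
      omega
    have hjs : j ≤ p ^ s := le_trans (le_of_lt hjp) (Nat.le_self_pow (by omega) p)
    omega
  set b := max (r + 1) (Nat.log p n + 1) with hb
  have hval : padicValNat p (Nat.choose n k) =
      ((Finset.Ico 1 b).filter fun s => p ^ s ≤ k % p ^ s + (n - k) % p ^ s).card :=
    padicValNat_choose hkn (lt_of_lt_of_le (Nat.lt_succ_self _) (le_max_right _ _))
  have hsubset : Finset.Ico 1 (r + 1) ⊆
      (Finset.Ico 1 b).filter fun s => p ^ s ≤ k % p ^ s + (n - k) % p ^ s := by
    intro s hs
    simp only [Finset.mem_Ico] at hs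
    refine Finset.mem_filter.2 ⟨Finset.mem_Ico.2 ⟨hs.1, lt_of_lt_of_le hs.2 (le_max_left _ _)⟩, ?_⟩
    exact hcarry s hs.1 (by omega)
  have hcard : r ≤ padicValNat p (Nat.choose n k) := by
    rw [hval]
    calc r = (Finset.Ico 1 (r + 1)).card := by simp
      _ ≤ _ := Finset.card_le_card hsubset
  exact dvd_trans (pow_dvd_pow p hcard) pow_padicValNat_dvd
end
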